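/- arXiv:2405.02209 — 3 statements merged into one kernel-verified Lean document; each statement's English description precedes it below -/
import Mathlib

section
/- Let A ≤ B be a flat extension of integral domains such that the induced extension of fraction fields Frac(A) ≤ Frac(B) is finite and separable. Then the tensor product B ⊗_A B is a reduced ring. -/
open scoped TensorProduct

/-!
Both factors of `B` embed in the fraction field `KB`, and since `B` and `KB` are flat over `A`,
`B ⊗[A] B` embeds in `KB ⊗[A] KB`. Because `KA` is a localization of `A`, the latter is
`KB ⊗[KA] KB`, which is reduced as `KB / KA` is finite separable, hence unramified.
-/

theorem isReduced_tensorProduct_self_of_isSeparable (K L : Type*) [Field K] [Field L]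
    [Algebra K L] [FiniteDimensional K L] [Algebra.IsSeparable K L] : IsReduced (L ⊗[K] L) :=
  have := Algebra.FormallyUnramified.of_isSeparable K L
  Algebra.FormallyUnramified.isReduced_of_field L (L ⊗[K] L)

theorem Algebra.TensorProduct.map_injective_of_flat_flat {R S S' T T' : Type*} [CommRing R]
    [Ring S] [Ring S'] [Ring T] [Ring T'] [Algebra R S] [Algebra R S'] [Algebra R T]
    [Algebra R T'] [Module.Flat R S'] [Module.Flat R T] (f : S →ₐ[R] S') (g : T →ₐ[R] T')
    (hf : Function.Injective f) (hg : Function.Injective g) :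
    Function.Injective (map f g) := by
  have : (map f g).toLinearMap = _root_.TensorProduct.map f.toLinearMap g.toLinearMap :=
    _root_.TensorProduct.ext' fun _ _ ↦ rfl
  rw [← AlgHom.coe_toLinearMap, this]
  exact _root_.TensorProduct.map_injective_of_flat_flat _ _ hf hg

theorem flat_domain_tensor_self_isReduced_general
    (A B : Type*) [CommRing A] [CommRing B]
    [Algebra A B] [Module.Flat A B]
    (KA KB : Type*) [Field KA] [Field KB]
    [Algebra A KA] [IsFractionRing A KA]
    [Algebra B KB] [IsFractionRing B KB]
    [Algebra A KB] [IsScalarTower A B KB]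
    [Algebra KA KB] [IsScalarTower A KA KB]
    [FiniteDimensional KA KB] [Algebra.IsSeparable KA KB] :
    IsReduced (B ⊗[A] B) := by
  have : Module.Flat B KB := IsLocalization.flat KB (nonZeroDivisors B)
  have : Module.Flat A KB := Module.Flat.trans A B KB
  have : IsReduced (KB ⊗[KA] KB) := isReduced_tensorProduct_self_of_isSeparable KA KB
  let e := IsLocalization.algebraTensorEquiv (nonZeroDivisors A) KA KB KB
  have : IsReduced (KB ⊗[A] KB) := isReduced_of_injective e.symm.toRingHom e.symm.injective
  let ι := IsScalarTower.toAlgHom A B KB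
  have hι : Function.Injective ι := IsFractionRing.injective B KB
  exact isReduced_of_injective (Algebra.TensorProduct.map ι ι).toRingHom
    (Algebra.TensorProduct.map_injective_of_flat_flat ι ι hι hι)

/-- Let `A ≤ B` be a flat extension of integral domains such that the induced extension of
fraction fields `Frac(A) ≤ Frac(B)` is finite and separable. Then `B ⊗[A] B` is reduced. -/
theorem flat_domain_tensor_self_isReduced
    (A B : Type*) [CommRing A] [IsDomain A] [CommRing B] [IsDomain B]
    [Algebra A B] (hinj : Function.Injective (algebraMap A B)) [Module.Flat A B]
    (KA KB : Type*) [Field KA] [Field KB]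
    [Algebra A KA] [IsFractionRing A KA]
    [Algebra B KB] [IsFractionRing B KB]
    [Algebra A KB] [IsScalarTower A B KB]
    [Algebra KA KB] [IsScalarTower A KA KB]
    [FiniteDimensional KA KB] [Algebra.IsSeparable KA KB] :
    IsReduced (B ⊗[A] B) :=
  flat_domain_tensor_self_isReduced_general A B KA KB
end

section
/- Let K be a topological field of characteristic p > 0 whose topology is Hausdorff and non-discrete. If the set K^p of p-th powers has nonempty interior, then K^p = K, i.e., K is perfect. -/
/-! The `p`-th powers form a subfield, the image of Frobenius. A subfield with nonempty interior is
an open additive subgroup; if `a ≠ 0`, a nonzero `b` close enough to `0` has both `b` and `a⁻¹ * b`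
in it, so it contains `a = b / (a⁻¹ * b)`. -/

open Topology

theorem exists_ne_zero_mem_of_mem_nhds_zero {G : Type*} [AddGroup G] [TopologicalSpace G]
    [IsTopologicalAddGroup G] (hnd : ¬ DiscreteTopology G) {s : Set G} (hs : s ∈ 𝓝 (0 : G)) :
    ∃ b ∈ s, b ≠ 0 := by
  by_contra! h
  have hinterior : interior s = {0} :=
    Set.eq_singleton_iff_unique_mem.mpr
      ⟨mem_interior_iff_mem_nhds.mpr hs, fun b hb => h b (interior_subset hb)⟩
  exact hnd (discreteTopology_iff_isOpen_singleton_zero.mpr (hinterior ▸ isOpen_interior))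

namespace Subfield

variable {K : Type*} [Field K] [TopologicalSpace K] [IsTopologicalRing K]

theorem eq_top_of_mem_nhds_zero (hnd : ¬ DiscreteTopology K) (F : Subfield K)
    (hF : (F : Set K) ∈ 𝓝 0) : F = ⊤ := by
  refine eq_top_iff.mpr fun a _ => ?_
  rcases eq_or_ne a 0 with rfl | ha
  · exact F.zero_mem
  have hscaled : (fun z => a⁻¹ * z) ⁻¹' F ∈ 𝓝 0 :=
    (continuous_const_mul a⁻¹).tendsto' 0 0 (mul_zero _) hF
  obtain ⟨b, ⟨hbF, hb'F⟩, hb⟩ :=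
    exists_ne_zero_mem_of_mem_nhds_zero hnd (Filter.inter_mem hF hscaled)
  have hab : a = b / (a⁻¹ * b) := by field_simp
  exact hab ▸ F.div_mem hbF hb'F

theorem eq_top_of_interior_nonempty (hnd : ¬ DiscreteTopology K) (F : Subfield K)
    (hF : (interior (F : Set K)).Nonempty) : F = ⊤ := by
  obtain ⟨u, hu⟩ := hF
  have hopen : IsOpen (F : Set K) :=
    F.toAddSubgroup.isOpen_of_mem_nhds (mem_interior_iff_mem_nhds.mp hu)
  exact F.eq_top_of_mem_nhds_zero hnd (hopen.mem_nhds F.zero_mem)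

end Subfield

theorem perfect_of_pthPowers_nonempty_interior_general
    (K : Type*) [Field K] [TopologicalSpace K] [IsTopologicalDivisionRing K]
    (hnd : ¬ DiscreteTopology K)
    (p : ℕ) (hp : p.Prime) [CharP K p]
    (hint : (interior {x : K | ∃ y : K, y ^ p = x}).Nonempty) :
    ∀ x : K, ∃ y : K, y ^ p = x := by
  have := Fact.mk hp
  have hpowers : {x : K | ∃ y : K, y ^ p = x} = (frobenius K p).fieldRange := by
    rw [RingHom.coe_fieldRange]
    rfl
  have htop := (frobenius K p).fieldRange.eq_top_of_interior_nonempty hnd (hpowers ▸ hint)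
  intro x
  exact RingHom.mem_fieldRange.mp (htop ▸ Subfield.mem_top x)

/-- Let `K` be a topological field of characteristic `p > 0` whose topology is Hausdorff and
non-discrete. If the set of `p`-th powers has nonempty interior, then every element of `K`
is a `p`-th power, i.e. `K` is perfect. -/
theorem perfect_of_pthPowers_nonempty_interior
    (K : Type*) [Field K] [TopologicalSpace K] [IsTopologicalDivisionRing K] [T2Space K]
    (hnd : ¬ DiscreteTopology K)
    (p : ℕ) (hp : p.Prime) [CharP K p]
    (hint : (interior {x : K | ∃ y : K, y ^ p = x}).Nonempty) :
    ∀ x : K, ∃ y : K, y ^ p = x :=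
  perfect_of_pthPowers_nonempty_interior_general K hnd p hp hint
end

section
/- Let K be a topological field of characteristic p > 0 that is perfect, with a Hausdorff non-discrete field topology. Suppose that for every open set Y containing 0, the image Y^p = {y^p : y ∈ Y} has nonempty interior. Then the Frobenius map x ↦ x^p is a homeomorphism of K. -/
/-! Frobenius is a continuous additive bijection, so only openness is at stake, and for an
additive homomorphism it suffices that images of neighbourhoods of `0` are neighbourhoods of `0`.
Given such a neighbourhood `X`, pick an open `Y ∋ 0` with `Y - Y ⊆ X`. If `z` is an interior
point of `f '' Y`, then `0 = z - z` is interior to `f '' Y - f '' Y = f '' (Y - Y) ⊆ f '' X`. -/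

open Filter Pointwise

theorem IsTopologicalAddGroup.isOpenMap_of_nonempty_interior_image
    {G H F : Type*} [AddGroup G] [TopologicalSpace G] [IsTopologicalAddGroup G]
    [AddGroup H] [TopologicalSpace H] [IsTopologicalAddGroup H]
    [FunLike F G H] [AddMonoidHomClass F G H] (f : F)
    (hf : ∀ Y : Set G, IsOpen Y → (0 : G) ∈ Y → (interior (f '' Y)).Nonempty) :
    IsOpenMap f := by
  refine IsTopologicalAddGroup.isOpenMap_iff_nhds_zero.mpr (le_map fun X hX => ?_)
  obtain ⟨V, hV, hVX⟩ := exists_nhds_half_neg hX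
  set Y := interior V
  obtain ⟨z, hz⟩ := hf Y isOpen_interior (mem_interior_iff_mem_nhds.mpr hV)
  have hYX : Y - Y ⊆ X := by
    rintro _ ⟨v, hv, w, hw, rfl⟩
    exact hVX v (interior_subset hv) w (interior_subset hw)
  have h0 : (0 : H) ∈ interior (f '' Y) - interior (f '' Y) := ⟨z, hz, z, hz, sub_self z⟩
  have hsub : interior (f '' Y) - interior (f '' Y) ⊆ interior (f '' X) :=
    calc interior (f '' Y) - interior (f '' Y) ⊆ interior (f '' Y - f '' Y) := subset_interior_sub
      _ = interior (f '' (Y - Y)) := by rw [Set.image_sub]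
      _ ⊆ interior (f '' X) := interior_mono (Set.image_mono hYX)
  exact mem_interior_iff_mem_nhds.mp (hsub h0)

theorem frobenius_isHomeomorph_general
    (K : Type*) [Field K] [TopologicalSpace K] [IsTopologicalDivisionRing K]
    (p : ℕ) [ExpChar K p] [PerfectRing K p]
    (hint : ∀ Y : Set K, IsOpen Y → (0 : K) ∈ Y →
      (interior ((fun y : K => y ^ p) '' Y)).Nonempty) :
    IsHomeomorph (fun x : K => x ^ p) :=
  ⟨continuous_pow p,
    IsTopologicalAddGroup.isOpenMap_of_nonempty_interior_image (frobenius K p) hint,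
    bijective_frobenius K p⟩

/-- Let `K` be a perfect topological field of characteristic `p > 0` with a Hausdorff
non-discrete field topology. Suppose that for every open set `Y` containing `0` the image of
`Y` under `y ↦ y ^ p` has nonempty interior. Then the Frobenius map `x ↦ x ^ p` is a
homeomorphism of `K`. -/
theorem frobenius_isHomeomorph
    (K : Type*) [Field K] [TopologicalSpace K] [IsTopologicalDivisionRing K] [T2Space K]
    (hnd : ¬ DiscreteTopology K)
    (p : ℕ) (hp : p.Prime) [CharP K p] [ExpChar K p] [PerfectRing K p]
    (hint : ∀ Y : Set K, IsOpen Y → (0 : K) ∈ Y →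
      (interior ((fun y : K => y ^ p) '' Y)).Nonempty) :
    IsHomeomorph (fun x : K => x ^ p) :=
  frobenius_isHomeomorph_general K p hint
end
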